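/- arXiv:1303.6660 — 3 statements merged into one kernel-verified Lean document; each statement's English description precedes it below -/
import Mathlib

section
/- Let φ: [a,b] → ℂ be smooth with Re φ' > 0 on [a,b], and let u ∈ L^∞[a,b] be continuous near b with u(t) ~ A(b-t)^{σ-1} as t → b for some σ ≥ 1 and A ≠ 0. Then as k → ∞, ∫_a^b e^{2kφ(t)} u(t) dt ~ A · Γ(σ) · (2kφ'(b))^{-σ} · e^{2kφ(b)}. -/
open MeasureTheory Set Filter

lemma aux_int_rpow_exp {s b : ℝ} (hs : -1 < s) (hb : 0 < b) :
    IntegrableOn (fun x : ℝ => x ^ s * Real.exp (-b * x)) (Ioi 0) := by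
  have := integrableOn_rpow_mul_exp_neg_mul_rpow hs zero_lt_one hb
  simpa [Real.rpow_one] using this

lemma aux_deriv_gamma {σ : ℝ} (hσ : 1 ≤ σ) {z₀ : ℂ} (hz₀ : 0 < z₀.re) :
    HasDerivAt (fun z : ℂ => ∫ x : ℝ in Ioi 0, ((x ^ (σ - 1) : ℝ) : ℂ) * Complex.exp (-(z * x)))
      (∫ x : ℝ in Ioi 0, ((x ^ (σ - 1) : ℝ) : ℂ) * (-(x:ℂ)) * Complex.exp (-(z₀ * x))) z₀ := by
  have hσ1 : (0:ℝ) ≤ σ - 1 := by linarith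
  have hcont : ∀ z : ℂ, Continuous (fun x : ℝ => ((x ^ (σ - 1) : ℝ) : ℂ) * Complex.exp (-(z * x))) := by
    intro z
    exact (Complex.continuous_ofReal.comp (Real.continuous_rpow_const hσ1)).mul
      (Complex.continuous_exp.comp (by continuity))
  have hcont' : Continuous (fun x : ℝ => ((x ^ (σ - 1) : ℝ) : ℂ) * (-(x:ℂ)) * Complex.exp (-(z₀ * x))) := by
    exact ((Complex.continuous_ofReal.comp (Real.continuous_rpow_const hσ1)).mul (by continuity)).mul
      (Complex.continuous_exp.comp (by continuity))
  have hnorm : ∀ (z : ℂ) (x : ℝ), 0 < x →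
      ‖((x ^ (σ - 1) : ℝ) : ℂ) * Complex.exp (-(z * x))‖ = x ^ (σ - 1) * Real.exp (-z.re * x) := by
    intro z x hx
    rw [norm_mul, Complex.norm_real, Real.norm_eq_abs, abs_of_nonneg (Real.rpow_nonneg hx.le _),
      Complex.norm_exp]
    congr 2
    simp [Complex.mul_re]
  have key := hasDerivAt_integral_of_dominated_loc_of_deriv_le (μ := volume.restrict (Ioi 0))
    (F := fun (z : ℂ) (x : ℝ) => ((x ^ (σ - 1) : ℝ) : ℂ) * Complex.exp (-(z * x)))
    (F' := fun (z : ℂ) (x : ℝ) => ((x ^ (σ - 1) : ℝ) : ℂ) * (-(x:ℂ)) * Complex.exp (-(z * x)))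
    (x₀ := z₀) (bound := fun x => x ^ σ * Real.exp (-(z₀.re / 2) * x))
    (Metric.ball_mem_nhds z₀ (half_pos hz₀)) ?_ ?_ ?_ ?_ ?_ ?_
  · exact key.2
  · exact Eventually.of_forall fun z => (hcont z).aestronglyMeasurable
  · apply Integrable.mono' (aux_int_rpow_exp (s := σ-1) (b := z₀.re) (by linarith) hz₀)
    · exact (hcont z₀).aestronglyMeasurable
    · filter_upwards [ae_restrict_mem measurableSet_Ioi] with x hx
      rw [hnorm z₀ x hx]
  · exact hcont'.aestronglyMeasurable
  · filter_upwards [ae_restrict_mem measurableSet_Ioi] with x hx z hz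
    have hzre : z₀.re / 2 ≤ z.re := by
      have h1 : |z.re - z₀.re| ≤ ‖z - z₀‖ := by
        simpa using Complex.abs_re_le_norm (z - z₀)
      have h2 : ‖z - z₀‖ < z₀.re / 2 := by
        rwa [Metric.mem_ball, Complex.dist_eq] at hz
      have := abs_sub_le_iff.mp (h1.trans h2.le) |>.2
      linarith
    have : ‖((x ^ (σ - 1) : ℝ) : ℂ) * (-(x:ℂ)) * Complex.exp (-(z * x))‖
        = x ^ (σ - 1) * x * Real.exp (-z.re * x) := by
      rw [norm_mul, norm_mul, Complex.norm_real, Real.norm_eq_abs,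
        abs_of_nonneg (Real.rpow_nonneg hx.le _), norm_neg, Complex.norm_real, Real.norm_eq_abs,
        abs_of_nonneg hx.le, Complex.norm_exp]
      congr 2
      simp [Complex.mul_re]
    rw [this, ← Real.rpow_add_one (ne_of_gt hx), sub_add_cancel]
    apply mul_le_mul_of_nonneg_left _ (Real.rpow_nonneg hx.le _)
    exact Real.exp_le_exp.mpr (by nlinarith [mul_nonneg (sub_nonneg.mpr hzre) (le_of_lt (mem_Ioi.mp hx))])
  · apply Integrable.mono' (aux_int_rpow_exp (by linarith : (-1:ℝ) < σ) (half_pos hz₀))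
    · exact (Real.continuous_rpow_const (by linarith)).mul
        (Real.continuous_exp.comp (by continuity)) |>.aestronglyMeasurable
    · filter_upwards [ae_restrict_mem measurableSet_Ioi] with x hx
      rw [Real.norm_eq_abs, abs_of_nonneg (mul_nonneg (Real.rpow_nonneg hx.le _) (Real.exp_pos _).le)]
  · filter_upwards [ae_restrict_mem measurableSet_Ioi] with x hx z hz
    have h1 : HasDerivAt (fun z : ℂ => -(z * x)) (-(x:ℂ)) z := by
      simpa using ((hasDerivAt_id z).mul_const (x:ℂ)).fun_neg
    have h2 := (h1.cexp).const_mul ((x ^ (σ - 1) : ℝ) : ℂ)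
    convert h2 using 1
    · rfl
    ring



lemma aux_gamma_complex {σ : ℝ} (hσ : 1 ≤ σ) {c : ℂ} (hc : 0 < c.re) :
    ∫ x : ℝ in Ioi 0, ((x ^ (σ - 1) : ℝ) : ℂ) * Complex.exp (-(c * x)) =
      Complex.Gamma σ / c ^ (σ : ℂ) := by
  set f : ℂ → ℂ := fun z => ∫ x : ℝ in Ioi 0, ((x ^ (σ - 1) : ℝ) : ℂ) * Complex.exp (-(z * x)) with hfdef
  set g : ℂ → ℂ := fun z => Complex.Gamma σ / z ^ (σ : ℂ) with hgdef
  have hU : IsOpen {z : ℂ | 0 < z.re} := isOpen_lt continuous_const Complex.continuous_re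
  have hf : AnalyticOnNhd ℂ f {z : ℂ | 0 < z.re} := by
    apply DifferentiableOn.analyticOnNhd _ hU
    intro z hz
    exact (aux_deriv_gamma hσ hz).differentiableAt.differentiableWithinAt
  have hg : AnalyticOnNhd ℂ g {z : ℂ | 0 < z.re} := by
    apply DifferentiableOn.analyticOnNhd _ hU
    intro z hz
    have hz' : (0:ℝ) < z.re := hz
    have hzne : z ≠ 0 := fun h => by simp [h] at hz'
    refine DifferentiableAt.differentiableWithinAt (DifferentiableAt.div (differentiableAt_const _) ?_ ?_)
    · exact differentiableAt_id.cpow (differentiableAt_const _) (Or.inl hz')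
    · simp [Complex.cpow_eq_zero_iff, hzne]
  have hreal : ∀ r : ℝ, 0 < r → f r = g r := by
    intro r hr
    have hσ0 : (0:ℝ) < σ := by linarith
    have h1 := Complex.integral_cpow_mul_exp_neg_mul_Ioi (a := (σ:ℂ)) (r := r) (by simpa using hσ0) hr
    have h2 : f r = ∫ t : ℝ in Ioi 0, (t:ℂ) ^ ((σ:ℂ) - 1) * Complex.exp (-(r * t)) := by
      apply setIntegral_congr_fun measurableSet_Ioi
      intro x hx
      dsimp only
      rw [Complex.ofReal_cpow (le_of_lt hx)]
      norm_num
    rw [h2, h1, hgdef]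
    dsimp only
    have harg : Complex.arg r ≠ Real.pi := by
      rw [Complex.arg_ofReal_of_nonneg hr.le]
      exact Real.pi_ne_zero.symm
    rw [one_div, Complex.inv_cpow _ _ harg, div_eq_mul_inv, mul_comm]
  have hfreq : ∃ᶠ z in nhdsWithin 1 {(1:ℂ)}ᶜ, f z = g z := by
    have htend : Tendsto (fun n : ℕ => ((1 + (n+1:ℝ)⁻¹ : ℝ) : ℂ)) atTop (nhdsWithin 1 {(1:ℂ)}ᶜ) := by
      rw [tendsto_nhdsWithin_iff]
      constructor
      · have h0 : Tendsto (fun n : ℕ => (1 + (n+1:ℝ)⁻¹ : ℝ)) atTop (nhds 1) := by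
          have := tendsto_one_div_add_atTop_nhds_zero_nat (𝕜 := ℝ)
          simp only [one_div] at this
          simpa using tendsto_const_nhds.add this
        have := (Complex.continuous_ofReal.tendsto 1).comp h0
        rw [show ((1:ℂ)) = ((1:ℝ):ℂ) by norm_num]
        exact this
      · apply Eventually.of_forall
        intro n
        simp only [mem_compl_iff, mem_singleton_iff]
        intro h
        have : (1 + (n+1:ℝ)⁻¹ : ℝ) = 1 := by exact_mod_cast h
        have hpos : (0:ℝ) < (n+1:ℝ)⁻¹ := by positivity
        linarith
    exact htend.frequently (Frequently.of_forall fun n => hreal _ (by positivity))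
  have := hf.eqOn_of_preconnected_of_frequently_eq hg
    (convex_halfSpace_re_gt 0).isPreconnected (by simp : (1:ℂ) ∈ {z : ℂ | 0 < z.re}) hfreq
  exact this hc




lemma aux_alg2 {A G P E I C3 : ℂ} (hA : A ≠ 0) (hG : G ≠ 0) (hP : P ≠ 0) (hE : E ≠ 0)
    (hC3 : C3 ≠ 0) :
    C3 * I / (A * (G / P)) = E * I / (A * G / (C3 * P) * E) := by
  field_simp

lemma aux_alg {A S P U E : ℂ} (hA : A ≠ 0) (hS : S ≠ 0) :
    U / (A * S) * (A * (P * S)) * E = P * E * U := by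
  field_simp

set_option maxHeartbeats 1000000 in
lemma aux_main (b L δ' m M : ℝ) (hL0 : 0 < L) (hδ'0 : 0 < δ') (hδ'L : δ' ≤ L)
    (hm : 0 < m) (hM0 : 0 ≤ M) (σ : ℝ) (hσ : 1 ≤ σ)
    (A c : ℂ) (hA : A ≠ 0) (hcre : 0 < c.re)
    (φ u : ℝ → ℂ) (hu_meas : Measurable u)
    (hφcont : ContinuousOn φ (Icc (b - L) b))
    (hder : HasDerivAt φ c b)
    (hB : ∀ s ∈ Icc (0:ℝ) L, m * s ≤ (φ b).re - (φ (b - s)).re)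
    (hC : ∀ s ∈ Ioc (0:ℝ) δ', ‖u (b - s)‖ ≤ 2 * ‖A‖ * s ^ (σ - 1))
    (hM : ∀ s ∈ Icc (0:ℝ) L, ‖u (b - s)‖ ≤ M)
    (hu_asymp : Tendsto (fun t : ℝ => u t / (A * ((b - t : ℝ) : ℂ) ^ ((σ - 1 : ℝ) : ℂ)))
      (nhdsWithin b (Iio b)) (nhds 1)) :
    Tendsto (fun k : ℝ => ∫ x in Ioi (0:ℝ),
        (Ioc (0:ℝ) (2*k*L)).indicator (fun x =>
          (((2*k) ^ (σ-1) : ℝ) : ℂ) * Complex.exp (((2*k : ℝ) : ℂ) * (φ (b - x/(2*k)) - φ b))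
            * u (b - x/(2*k))) x)
      atTop (nhds (A * (Complex.Gamma σ / c ^ ((σ:ℝ) : ℂ)))) := by
  have hσ1 : (0:ℝ) ≤ σ - 1 := by linarith
  have hlim_int : (∫ x in Ioi (0:ℝ), A * (((x ^ (σ-1) : ℝ) : ℂ) * Complex.exp (-(c * x))))
      = A * (Complex.Gamma σ / c ^ ((σ:ℝ) : ℂ)) := by
    rw [MeasureTheory.integral_const_mul, aux_gamma_complex hσ hcre]
  rw [← hlim_int]
  refine tendsto_integral_filter_of_dominated_convergence
    (fun x => (2 * ‖A‖ + M / δ' ^ (σ - 1)) * (x ^ (σ-1) * Real.exp (-m * x))) ?_ ?_ ?_ ?_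
  · -- measurability
    filter_upwards [eventually_gt_atTop 0] with k hk
    have h2k : (0:ℝ) < 2*k := by linarith
    rw [aestronglyMeasurable_indicator_iff measurableSet_Ioc,
      Measure.restrict_restrict measurableSet_Ioc, inter_eq_left.mpr Ioc_subset_Ioi_self]
    have hmap : MapsTo (fun x : ℝ => b - x/(2*k)) (Ioc 0 (2*k*L)) (Icc (b - L) b) := by
      intro x hx
      have h1 : x / (2*k) ≤ L := by rw [div_le_iff₀ h2k]; nlinarith [hx.2]
      have h2 : 0 < x / (2*k) := div_pos hx.1 h2k
      exact ⟨by linarith, by linarith⟩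
    refine AEStronglyMeasurable.mul (AEStronglyMeasurable.mul aestronglyMeasurable_const ?_) ?_
    · refine ContinuousOn.aestronglyMeasurable ?_ measurableSet_Ioc
      refine Complex.continuous_exp.comp_continuousOn ?_
      refine ContinuousOn.mul continuousOn_const (ContinuousOn.sub ?_ continuousOn_const)
      exact hφcont.comp (Continuous.continuousOn (by continuity)) hmap
    · exact (hu_meas.comp ((measurable_id.div_const (2*k)).const_sub b)).aestronglyMeasurable
  · -- bound
    filter_upwards [eventually_gt_atTop 0] with k hk
    have h2k : (0:ℝ) < 2*k := by linarith
    filter_upwards [ae_restrict_mem measurableSet_Ioi] with x hx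
    rw [mem_Ioi] at hx
    have hbd0 : 0 ≤ x ^ (σ-1) * Real.exp (-m * x) := by positivity
    by_cases hmem : x ∈ Ioc 0 (2*k*L)
    · rw [indicator_of_mem hmem]
      have hs0 : 0 < x / (2*k) := div_pos hx h2k
      have hsL : x / (2*k) ≤ L := by rw [div_le_iff₀ h2k]; nlinarith [hmem.2]
      have hxs : x = 2*k*(x / (2*k)) := by field_simp
      have hexp : ‖Complex.exp (((2*k : ℝ) : ℂ) * (φ (b - x/(2*k)) - φ b))‖ ≤ Real.exp (-m * x) := by
        rw [Complex.norm_exp]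
        apply Real.exp_le_exp.mpr
        have hre : ((((2*k : ℝ)) : ℂ) * (φ (b - x/(2*k)) - φ b)).re
            = (2*k) * ((φ (b - x/(2*k))).re - (φ b).re) := by
          simp [Complex.mul_re, Complex.sub_re]
        rw [hre]
        have hBs := hB (x/(2*k)) ⟨hs0.le, hsL⟩
        nlinarith
      have hnorm2k : ‖((((2*k) ^ (σ-1) : ℝ)) : ℂ)‖ = (2*k) ^ (σ-1) := by
        rw [Complex.norm_real, Real.norm_eq_abs, abs_of_nonneg (Real.rpow_nonneg h2k.le _)]
      rw [norm_mul, norm_mul, hnorm2k]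
      have hkey : (2*k) ^ (σ-1) * (x/(2*k)) ^ (σ-1) = x ^ (σ-1) := by
        rw [← Real.mul_rpow h2k.le hs0.le]
        congr 1
        field_simp
      rcases le_or_gt (x/(2*k)) δ' with hcase | hcase
      · have hu := hC (x/(2*k)) ⟨hs0, hcase⟩
        have hb1 : (2*k) ^ (σ-1) * ‖Complex.exp (((2*k : ℝ) : ℂ) * (φ (b - x/(2*k)) - φ b))‖
              * ‖u (b - x/(2*k))‖
            ≤ (2*k) ^ (σ-1) * Real.exp (-m*x) * (2*‖A‖ * (x/(2*k))^(σ-1)) := by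
          apply mul_le_mul _ hu (norm_nonneg _) (by positivity)
          exact mul_le_mul_of_nonneg_left hexp (Real.rpow_nonneg h2k.le _)
        refine le_trans hb1 ?_
        rw [show (2*k)^(σ-1) * Real.exp (-m*x) * (2*‖A‖ * (x/(2*k))^(σ-1))
            = 2*‖A‖ * ((2*k)^(σ-1) * (x/(2*k))^(σ-1)) * Real.exp (-m*x) by ring, hkey]
        have h0 : 0 ≤ M / δ' ^ (σ-1) := by positivity
        have h1 : 0 ≤ M / δ' ^ (σ-1) * (x^(σ-1) * Real.exp (-m*x)) := mul_nonneg h0 hbd0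
        calc 2*‖A‖ * (x ^ (σ-1)) * Real.exp (-m*x)
            ≤ 2*‖A‖ * (x^(σ-1)) * Real.exp (-m*x)
              + M / δ'^(σ-1) * (x^(σ-1) * Real.exp (-m*x)) := by linarith
          _ = (2 * ‖A‖ + M / δ'^(σ-1)) * (x^(σ-1) * Real.exp (-m*x)) := by ring
      · have hu := hM (x/(2*k)) ⟨hs0.le, hsL⟩
        have h2kle : (2*k) ≤ x / δ' := by
          rw [le_div_iff₀ hδ'0]
          nlinarith
        have hple : (2*k)^(σ-1) ≤ (x/δ')^(σ-1) := Real.rpow_le_rpow h2k.le h2kle hσ1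
        have hxδ : (x/δ')^(σ-1) = x^(σ-1) / δ'^(σ-1) := Real.div_rpow hx.le hδ'0.le (σ-1)
        have hb1 : (2*k) ^ (σ-1) * ‖Complex.exp (((2*k : ℝ) : ℂ) * (φ (b - x/(2*k)) - φ b))‖
              * ‖u (b - x/(2*k))‖
            ≤ (x^(σ-1) / δ'^(σ-1)) * Real.exp (-m*x) * M := by
          apply mul_le_mul _ hu (norm_nonneg _) (by positivity)
          rw [← hxδ]
          exact mul_le_mul hple hexp (norm_nonneg _) (Real.rpow_nonneg (by positivity) _)
        refine le_trans hb1 ?_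
        have heq : x^(σ-1) / δ'^(σ-1) * Real.exp (-m*x) * M
            = M / δ'^(σ-1) * (x^(σ-1) * Real.exp (-m*x)) := by ring
        rw [heq]
        have h0 : 0 ≤ 2 * ‖A‖ := by positivity
        have h1 : 0 ≤ 2 * ‖A‖ * (x^(σ-1) * Real.exp (-m*x)) := mul_nonneg h0 hbd0
        calc M / δ'^(σ-1) * (x^(σ-1) * Real.exp (-m*x))
            ≤ M / δ'^(σ-1) * (x^(σ-1) * Real.exp (-m*x))
              + 2*‖A‖ * (x^(σ-1) * Real.exp (-m*x)) := by linarith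
          _ = (2 * ‖A‖ + M / δ'^(σ-1)) * (x^(σ-1) * Real.exp (-m*x)) := by ring
    · rw [indicator_of_notMem hmem]
      simpa using mul_nonneg (by positivity) hbd0
  · exact (aux_int_rpow_exp (by linarith) hm).const_mul _
  · -- pointwise limit
    filter_upwards [ae_restrict_mem measurableSet_Ioi] with x hx
    rw [mem_Ioi] at hx
    have htk : Tendsto (fun k : ℝ => b - x/(2*k)) atTop (nhdsWithin b (Iio b)) := by
      rw [tendsto_nhdsWithin_iff]
      constructor
      · have h1 : Tendsto (fun k : ℝ => x/(2*k)) atTop (nhds 0) :=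
          Tendsto.div_atTop tendsto_const_nhds (Tendsto.const_mul_atTop two_pos tendsto_id)
        simpa using tendsto_const_nhds.sub h1
      · filter_upwards [eventually_gt_atTop 0] with k hk
        have : 0 < x/(2*k) := div_pos hx (by linarith)
        simp only [mem_Iio]
        linarith
    have hq : Tendsto (fun k : ℝ => u (b - x/(2*k)) / (A * (((x/(2*k) : ℝ)) : ℂ) ^ ((σ - 1 : ℝ) : ℂ)))
        atTop (nhds 1) := by
      have h1 := hu_asymp.comp htk
      refine h1.congr fun k => ?_
      simp [sub_sub_cancel]
    have hE : Tendsto (fun k : ℝ => Complex.exp (((2*k : ℝ) : ℂ) * (φ (b - x/(2*k)) - φ b)))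
        atTop (nhds (Complex.exp (-(c * x)))) := by
      have hslope := hasDerivAt_iff_tendsto_slope.mp hder
      have htk' : Tendsto (fun k : ℝ => b - x/(2*k)) atTop (nhdsWithin b {b}ᶜ) := by
        refine htk.mono_right (nhdsWithin_mono b ?_)
        intro y hy
        simp only [mem_Iio] at hy
        simp only [mem_compl_iff, mem_singleton_iff]
        exact ne_of_lt hy
      have h2 : Tendsto (fun k : ℝ => (-x) • slope φ b (b - x/(2*k))) atTop (nhds ((-x) • c)) :=
        (hslope.comp htk').const_smul (-x)
      have h3 : ((-x : ℝ)) • c = -(c * x) := by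
        rw [Complex.real_smul]
        push_cast
        ring
      rw [h3] at h2
      refine (Complex.continuous_exp.tendsto _).comp (h2.congr' ?_)
      filter_upwards [eventually_gt_atTop 0] with k hk
      have h2k : (0:ℝ) < 2*k := by linarith
      rw [slope]
      rw [smul_smul]
      have heq : (-x) * ((b - x/(2*k) - b)⁻¹) = 2*k := by
        rw [show b - x/(2*k) - b = -(x/(2*k)) by ring]
        field_simp
      rw [heq, Complex.real_smul, vsub_eq_sub]
    have hcomb := (hq.mul (tendsto_const_nhds :
        Tendsto (fun _ : ℝ => A * ((x ^ (σ-1) : ℝ) : ℂ)) atTop _)).mul hE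
    have hval : (1 : ℂ) * (A * ((x ^ (σ-1) : ℝ) : ℂ)) * Complex.exp (-(c*x))
        = A * (((x ^ (σ-1) : ℝ) : ℂ) * Complex.exp (-(c*x))) := by ring
    rw [hval] at hcomb
    refine Tendsto.congr' ?_ hcomb
    filter_upwards [eventually_ge_atTop (max 1 (x / (2*L)))] with k hk
    have hk1 : (1:ℝ) ≤ k := le_trans (le_max_left _ _) hk
    have h2k : (0:ℝ) < 2*k := by linarith
    have hxle : x ≤ 2*k*L := by
      have h1 := le_trans (le_max_right _ _) hk
      rw [div_le_iff₀ (by linarith : (0:ℝ) < 2*L)] at h1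
      nlinarith
    rw [indicator_of_mem (show x ∈ Ioc 0 (2*k*L) from ⟨hx, hxle⟩)]
    have hs0 : 0 < x / (2*k) := div_pos hx h2k
    have hS : (((x/(2*k) : ℝ)) : ℂ) ^ ((σ - 1 : ℝ) : ℂ) = (((x/(2*k)) ^ (σ-1) : ℝ) : ℂ) :=
      (Complex.ofReal_cpow hs0.le _).symm
    have hprod : ((2*k) ^ (σ-1) : ℝ) * (x/(2*k)) ^ (σ-1) = x ^ (σ-1) := by
      rw [← Real.mul_rpow h2k.le hs0.le]
      congr 1
      field_simp
    have hSne : ((((x/(2*k)) ^ (σ-1) : ℝ)) : ℂ) ≠ 0 := by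
      rw [Complex.ofReal_ne_zero]
      exact (Real.rpow_pos_of_pos hs0 _).ne'
    rw [hS, ← hprod, Complex.ofReal_mul]
    exact aux_alg hA hSne

lemma aux_cpow_real_mul {r : ℝ} (hr : 0 < r) {z : ℂ} (hz : z ≠ 0) (w : ℂ) :
    ((r : ℂ) * z) ^ w = (r : ℂ) ^ w * z ^ w := by
  have hrz : (r : ℂ) * z ≠ 0 :=
    mul_ne_zero (Complex.ofReal_ne_zero.mpr hr.ne') hz
  rw [Complex.cpow_def_of_ne_zero hrz, Complex.cpow_def_of_ne_zero (Complex.ofReal_ne_zero.mpr hr.ne'),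
    Complex.cpow_def_of_ne_zero hz, Complex.log_ofReal_mul hr hz, ← Complex.exp_add,
    ← Complex.ofReal_log hr.le, add_mul]

/-- Laplace's method with complex phase: if `φ` is smooth on `[a,b]` with `Re φ' > 0`,
and `u` is bounded measurable, continuous near `b`, with `u(t) ~ A (b-t)^{σ-1}` as `t → b⁻`
for some `σ ≥ 1`, `A ≠ 0`, then
`∫_a^b e^{2kφ(t)} u(t) dt ~ A Γ(σ) (2k φ'(b))^{-σ} e^{2k φ(b)}` as `k → ∞`. -/
theorem laplace_method_complex_phase
    (a b : ℝ) (hab : a < b)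
    (φ : ℝ → ℂ) (hφ : ContDiffOn ℝ (⊤ : ℕ∞) φ (Icc a b))
    (hφ' : ∀ t ∈ Icc a b, 0 < (deriv φ t).re)
    (u : ℝ → ℂ) (hu_meas : Measurable u)
    (M : ℝ) (hu_bd : ∀ t ∈ Icc a b, ‖u t‖ ≤ M)
    (δ : ℝ) (hδ : 0 < δ) (hu_cont : ContinuousOn u (Icc (b - δ) b))
    (A : ℂ) (hA : A ≠ 0) (σ : ℝ) (hσ : 1 ≤ σ)
    (hu_asymp : Tendsto (fun t : ℝ => u t / (A * ((b - t : ℝ) : ℂ) ^ ((σ - 1 : ℝ) : ℂ)))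
      (nhdsWithin b (Iio b)) (nhds 1)) :
    Tendsto (fun k : ℝ =>
      (∫ t in a..b, Complex.exp (2 * k * φ t) * u t) /
        (A * Complex.Gamma (σ : ℂ) / ((2 * k : ℂ) * deriv φ b) ^ ((σ : ℝ) : ℂ)
          * Complex.exp (2 * k * φ b)))
      atTop (nhds 1) := by
  have hσ1 : (0:ℝ) ≤ σ - 1 := by linarith
  set c : ℂ := deriv φ b with hc_def
  have hbmem : b ∈ Icc a b := right_mem_Icc.mpr hab.le
  have hcre : 0 < c.re := hφ' b hbmem
  have hcne : c ≠ 0 := fun h => by simp [h] at hcre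
  set L : ℝ := b - a with hL_def
  have hL0 : 0 < L := sub_pos.mpr hab
  -- differentiability on Icc
  have hdiff : ∀ t ∈ Icc a b, HasDerivAt φ (deriv φ t) t := by
    intro t ht
    by_cases hd : DifferentiableAt ℝ φ t
    · exact hd.hasDerivAt
    · exfalso
      have := hφ' t ht
      rw [deriv_zero_of_not_differentiableAt hd] at this
      simp at this
  -- continuity of deriv φ on Icc
  have hudo : UniqueDiffOn ℝ (Icc a b) := uniqueDiffOn_Icc hab
  have hderiv_cont : ContinuousOn (fun t => deriv φ t) (Icc a b) := by
    have h1 : ContinuousOn (derivWithin φ (Icc a b)) (Icc a b) :=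
      hφ.continuousOn_derivWithin hudo (by simp)
    exact h1.congr fun t ht =>
      ((hdiff t ht).differentiableAt.derivWithin (hudo t ht)).symm
  -- minimum m of Re deriv φ
  obtain ⟨t₀, ht₀, hmin⟩ := isCompact_Icc.exists_isMinOn (nonempty_Icc.mpr hab.le)
    (Complex.continuous_re.comp_continuousOn hderiv_cont)
  rw [isMinOn_iff] at hmin
  set m : ℝ := (deriv φ t₀).re with hm_def
  have hm : 0 < m := hφ' t₀ ht₀
  have hmle : ∀ t ∈ Icc a b, m ≤ (deriv φ t).re := hmin
  -- key decay bound
  have hB : ∀ t ∈ Icc a b, m * (b - t) ≤ (φ b).re - (φ t).re := by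
    have hre : ∀ x ∈ Icc a b, HasDerivAt (fun t => (φ t).re) ((deriv φ x).re) x := fun x hx =>
      Complex.reCLM.hasFDerivAt.comp_hasDerivAt x (hdiff x hx)
    intro t ht
    refine (convex_Icc a b).mul_sub_le_image_sub_of_le_deriv
      (Complex.continuous_re.comp_continuousOn hφ.continuousOn)
      (fun x hx => ((hre x (interior_subset hx)).differentiableAt).differentiableWithinAt)
      (fun x hx => ?_) t ht b hbmem ht.2
    show m ≤ deriv (fun t => (φ t).re) x
    rw [(hre x (interior_subset hx)).deriv]
    exact hmle x (interior_subset hx)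
  -- bound of u near b
  have hM0 : 0 ≤ M := le_trans (norm_nonneg _) (hu_bd b hbmem)
  obtain ⟨δ', hδ'0, hδ'L, hC⟩ : ∃ δ' : ℝ, 0 < δ' ∧ δ' ≤ L ∧
      ∀ s ∈ Ioc (0:ℝ) δ', ‖u (b - s)‖ ≤ 2 * ‖A‖ * s ^ (σ - 1) := by
    have h2 : ∀ᶠ t in nhdsWithin b (Iio b),
        ‖u t / (A * ((b - t : ℝ) : ℂ) ^ ((σ - 1 : ℝ) : ℂ))‖ < 2 := by
      apply (hu_asymp.norm).eventually_lt_const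
      norm_num
    have h3 : ∀ᶠ t in nhdsWithin b (Iio b), ‖u t‖ ≤ 2 * ‖A‖ * (b - t) ^ (σ - 1) := by
      filter_upwards [h2, self_mem_nhdsWithin] with t h2t htb
      rw [mem_Iio] at htb
      have hbt : 0 < b - t := sub_pos.mpr htb
      have hden : ‖A * ((b - t : ℝ) : ℂ) ^ ((σ - 1 : ℝ) : ℂ)‖ = ‖A‖ * (b - t) ^ (σ - 1) := by
        rw [norm_mul]
        congr 1
        rw [Complex.norm_cpow_eq_rpow_re_of_pos hbt]
        norm_num
      have hden0 : (0:ℝ) < ‖A‖ * (b - t) ^ (σ - 1) :=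
        mul_pos (norm_pos_iff.mpr hA) (Real.rpow_pos_of_pos hbt _)
      rw [norm_div, hden, div_lt_iff₀ hden0] at h2t
      calc ‖u t‖ ≤ 2 * (‖A‖ * (b - t) ^ (σ - 1)) := h2t.le
        _ = 2 * ‖A‖ * (b - t) ^ (σ - 1) := by ring
    rw [eventually_iff, mem_nhdsLT_iff_exists_Ioo_subset] at h3
    obtain ⟨l, hl, hsub⟩ := h3
    rw [mem_Iio] at hl
    refine ⟨min ((b - l)/2) L, lt_min (by linarith) hL0, min_le_right _ _, ?_⟩
    intro s hs
    have hs2 : s ≤ (b - l)/2 := le_trans hs.2 (min_le_left _ _)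
    have h1 : b - s ∈ Ioo l b := ⟨by linarith, by linarith [hs.1]⟩
    have := hsub h1
    simpa using this
  -- translate hypotheses for aux_main
  have hB' : ∀ s ∈ Icc (0:ℝ) L, m * s ≤ (φ b).re - (φ (b - s)).re := by
    intro s hs
    have hs2 : s ≤ b - a := hL_def ▸ hs.2
    have := hB (b - s) ⟨by linarith [hs.1, hs2], by linarith [hs.1, hs2]⟩
    simpa using this
  have hM' : ∀ s ∈ Icc (0:ℝ) L, ‖u (b - s)‖ ≤ M := by
    intro s hs
    have hs2 : s ≤ b - a := hL_def ▸ hs.2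
    exact hu_bd _ ⟨by linarith [hs.1, hs2], by linarith [hs.1, hs2]⟩
  have hφcont' : ContinuousOn φ (Icc (b - L) b) := by
    have hsub2 : Icc (b - L) b ⊆ Icc a b := by
      rw [hL_def, sub_sub_cancel]
    exact hφ.continuousOn.mono hsub2
  have hDCT := aux_main b L δ' m M hL0 hδ'0 hδ'L hm hM0 σ hσ A c hA hcre φ u hu_meas hφcont'
    (hdiff b hbmem) hB' hC hM' hu_asymp
  -- nonvanishing constants
  have hGne : Complex.Gamma ((σ:ℝ) : ℂ) ≠ 0 := by
    apply Complex.Gamma_ne_zero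
    intro n h
    have hre := congrArg Complex.re h
    simp only [Complex.ofReal_re, Complex.neg_re, Complex.natCast_re] at hre
    have hn : (0:ℝ) ≤ (n:ℝ) := Nat.cast_nonneg n
    linarith
  have hcpow_ne : c ^ ((σ:ℝ) : ℂ) ≠ 0 := by
    simp [Complex.cpow_eq_zero_iff, hcne]
  have hconst_ne : A * (Complex.Gamma ((σ:ℝ):ℂ) / c ^ ((σ:ℝ):ℂ)) ≠ 0 :=
    mul_ne_zero hA (div_ne_zero hGne hcpow_ne)
  have hfinal := hDCT.div_const (A * (Complex.Gamma ((σ:ℝ):ℂ) / c ^ ((σ:ℝ):ℂ)))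
  rw [div_self hconst_ne] at hfinal
  refine Tendsto.congr' ?_ hfinal
  filter_upwards [eventually_gt_atTop 0] with k hk
  have h2k : (0:ℝ) < 2*k := by linarith
  set g : ℝ → ℂ := fun t => Complex.exp (((2*k:ℝ):ℂ) * (φ t - φ b)) * u t with hg_def
  set I₁ : ℂ := ∫ t in a..b, g t with hI₁
  have horig : (∫ t in a..b, Complex.exp (2 * k * φ t) * u t)
      = Complex.exp (2 * k * φ b) * I₁ := by
    rw [hI₁, ← intervalIntegral.integral_const_mul]
    apply intervalIntegral.integral_congr
    intro t ht
    simp only [hg_def]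
    rw [← mul_assoc, ← Complex.exp_add]
    have harg : 2 * (k:ℂ) * φ b + ((2*k:ℝ):ℂ) * (φ t - φ b) = 2 * k * φ t := by
      push_cast
      ring
    rw [harg]
  have hsub1 : (∫ s in (0:ℝ)..L, g (b - s)) = I₁ := by
    rw [intervalIntegral.integral_comp_sub_left g b, hI₁, hL_def, sub_sub_cancel, sub_zero]
  have hsub2 : (∫ x in (0:ℝ)..(2*k*L), g (b - x/(2*k))) = ((2*k:ℝ):ℂ) * I₁ := by
    have h := intervalIntegral.integral_comp_div (a := 0) (b := 2*k*L) (c := 2*k)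
      (f := fun s => g (b - s)) h2k.ne'
    rw [zero_div, mul_div_cancel_left₀ _ h2k.ne'] at h
    rw [h, hsub1, Complex.real_smul]
  have hind : (∫ x in Ioi (0:ℝ), (Ioc (0:ℝ) (2*k*L)).indicator
        (fun x => (((2*k) ^ (σ-1) : ℝ) : ℂ)
          * Complex.exp (((2*k : ℝ) : ℂ) * (φ (b - x/(2*k)) - φ b)) * u (b - x/(2*k))) x)
      = (((2*k)^(σ-1) : ℝ) : ℂ) * (((2*k:ℝ):ℂ) * I₁) := by
    rw [integral_indicator measurableSet_Ioc, Measure.restrict_restrict measurableSet_Ioc,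
      inter_eq_left.mpr Ioc_subset_Ioi_self,
      ← intervalIntegral.integral_of_le (by positivity : (0:ℝ) ≤ 2*k*L),
      ← hsub2, ← intervalIntegral.integral_const_mul]
    apply intervalIntegral.integral_congr
    intro x hx
    simp only [hg_def]
    ring
  rw [hind, horig]
  have hcpow2 : ((2 * (k:ℂ)) * c) ^ ((σ:ℝ):ℂ) = (((2*k)^σ : ℝ) : ℂ) * c ^ ((σ:ℝ):ℂ) := by
    have h1 : ((2*k : ℝ) : ℂ) = 2 * (k:ℂ) := by push_cast; ring
    rw [← h1, aux_cpow_real_mul h2k hcne, ← Complex.ofReal_cpow h2k.le]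
  rw [hcpow2]
  have hexp_ne : Complex.exp (2 * k * φ b) ≠ 0 := Complex.exp_ne_zero _
  have hr1 : (((2*k)^(σ-1) : ℝ) : ℂ) * ((2*k:ℝ):ℂ) = (((2*k)^σ : ℝ):ℂ) := by
    rw [← Complex.ofReal_mul]
    congr 1
    rw [← Real.rpow_add_one h2k.ne' (σ-1), sub_add_cancel]
  have hC3 : (((2*k)^σ : ℝ):ℂ) ≠ 0 := by
    rw [Complex.ofReal_ne_zero]
    exact (Real.rpow_pos_of_pos h2k _).ne'
  rw [← mul_assoc, hr1]
  exact aux_alg2 hA hGne hcpow_ne hexp_ne hC3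
end

section
/- Define φ(α, r) = α log((α cosh r + √(1 + α² sinh² r))/√(α²-1)) + (1/2) log((cosh r − √(1+α² sinh² r))/(cosh r + √(1+α² sinh² r))). Then as r → 0⁺ (with α fixed, Re α > 0, α ∉ [0,1]), φ(α, r) = log(r/2) + p(α) + O(r²), where p(α) = (α/2) log((α+1)/(α-1)) + (1/2) log(1-α²). -/
open Set

/-- Principal branch square root. -/
noncomputable def csqrt (z : ℂ) : ℂ := z ^ ((1 : ℂ) / 2)

/-- The Liouville phase `φ(α,r)` for the Legendre equation. -/
noncomputable def phiL (α : ℂ) (r : ℝ) : ℂ :=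
  α * Complex.log ((α * (Real.cosh r : ℂ) + csqrt (1 + α ^ 2 * (Real.sinh r : ℂ) ^ 2))
        / csqrt (α ^ 2 - 1))
    + (1 / 2) * Complex.log (((Real.cosh r : ℂ) - csqrt (1 + α ^ 2 * (Real.sinh r : ℂ) ^ 2))
        / ((Real.cosh r : ℂ) + csqrt (1 + α ^ 2 * (Real.sinh r : ℂ) ^ 2)))

/-- `p(α) = (α/2) log((α+1)/(α-1)) + (1/2) log(1-α²)`. -/
noncomputable def pfun (α : ℂ) : ℂ :=
  α / 2 * Complex.log ((α + 1) / (α - 1)) + (1 / 2) * Complex.log (1 - α ^ 2)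

/-! With `S = √(1 + α² sinh² r)`, `m = (cosh r + S) / 2` and `u = (α cosh r + S) / (α + 1)`,
the arguments of the two logarithms in `φ` factor as
`(α cosh r + S) / √(α² - 1) = u · v` with `v = (α + 1) / √(α² - 1)`, a square root of
`(α + 1) / (α - 1)` with positive real part, and, since `cosh² r - S² = (1 - α²) sinh² r`, as
`(cosh r - S) / (cosh r + S) = (sinh r / 2)² · (1 - α²) / m²`.
As `u, m → 1` the principal logarithms split along these products, which gives
`φ(α, r) - log (r / 2) - p(α) = α log u + log (sinh r / r) + ½ log m⁻²`;
each term is `O(r²)` because `u - 1`, `m - 1` and `sinh r / r - 1` are. -/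

open Complex Filter Asymptotics Topology

lemma csqrt_sq (z : ℂ) : csqrt z ^ 2 = z := by
  rw [csqrt, one_div]
  exact cpow_ofNat_inv_pow z 2

lemma csqrt_one : csqrt 1 = 1 := one_cpow _

lemma csqrt_ofReal {x : ℝ} (hx : 0 ≤ x) : csqrt x = (√x : ℝ) := by
  rw [Real.sqrt_eq_rpow, ofReal_cpow hx, csqrt]
  norm_num

lemma differentiableAt_csqrt {z : ℂ} (hz : z ∈ slitPlane) : DifferentiableAt ℂ csqrt z :=
  differentiableAt_id.cpow_const hz

lemma re_csqrt_pos {z : ℂ} (hz : z ∈ slitPlane) : 0 < (csqrt z).re := by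
  have harg : |z.arg / 2| < Real.pi / 2 := by
    rw [abs_div, abs_two]
    have h := mem_slitPlane_iff_arg.1 hz
    have := abs_lt.2 ⟨neg_pi_lt_arg z, (arg_le_pi z).lt_of_ne h.1⟩
    linarith
  rw [csqrt, cpow_def_of_ne_zero (slitPlane_ne_zero hz), exp_re]
  have him : (log z * (1 / 2)).im = z.arg / 2 := by
    simp [log_im, div_eq_mul_inv]
  rw [him]
  exact mul_pos (Real.exp_pos _) (Real.cos_pos_of_mem_Ioo (abs_lt.1 harg))

lemma Complex.log_mul_of_re_pos {x y : ℂ} (hx : 0 < x.re) (hy : 0 < y.re) :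
    log (x * y) = log x + log y := by
  have hx' := abs_arg_lt_pi_div_two_iff.2 (Or.inl hx)
  have hy' := abs_arg_lt_pi_div_two_iff.2 (Or.inl hy)
  refine log_mul (ne_zero_of_re_pos hx) (ne_zero_of_re_pos hy) ⟨?_, ?_⟩ <;>
    linarith [abs_lt.1 hx', abs_lt.1 hy']

lemma Filter.Tendsto.eventually_re_pos {ι : Type*} {l : Filter ι} {y : ι → ℂ}
    (hy : Tendsto y l (𝓝 1)) : ∀ᶠ i in l, 0 < (y i).re := by
  simpa using (continuous_re.tendsto 1).comp hy |>.eventually (lt_mem_nhds one_pos)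

lemma eventually_log_mul_eq_add_log {ι : Type*} {l : Filter ι} {K : ℂ} (hK : K ≠ 0)
    {y : ι → ℂ} (hy : Tendsto y l (𝓝 1)) (hKy : K ∈ slitPlane ∨ ∀ᶠ i in l, (y i).im = 0) :
    ∀ᶠ i in l, log (K * y i) = log K + log (y i) := by
  rcases hKy with hK' | hreal
  · have harg : Tendsto (fun i => (y i).arg) l (𝓝 0) := by
      simpa [Function.comp_def] using (continuousAt_arg one_mem_slitPlane).tendsto.comp hy
    have hKarg := mem_slitPlane_iff_arg.1 hK'
    have hlt : K.arg < Real.pi := (arg_le_pi K).lt_of_ne hKarg.1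
    filter_upwards [hy.eventually_ne one_ne_zero, harg.eventually (Ioo_mem_nhds
      (by linarith [neg_pi_lt_arg K] : -Real.pi - K.arg < 0) (by linarith : 0 < Real.pi - K.arg))]
      with i hy0 hyarg
    exact log_mul hK hy0 ⟨by linarith [hyarg.1], by linarith [hyarg.2]⟩
  · filter_upwards [hreal, hy.eventually_re_pos] with i him hre
    have hyi : y i = ((y i).re : ℂ) := Complex.ext rfl (by simpa using him)
    rw [hyi, log_mul_ofReal _ hre _ hK, ofReal_log hre.le, add_comm]

lemma Real.sinh_le_mul_cosh {x : ℝ} (hx : 0 ≤ x) : Real.sinh x ≤ x * Real.cosh x := by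
  have hmono : MonotoneOn (fun t => t * Real.cosh t - Real.sinh t) (Set.Ici 0) := by
    refine monotoneOn_of_deriv_nonneg (convex_Ici 0) (by fun_prop) (by fun_prop) fun t ht => ?_
    rw [interior_Ici] at ht
    have hd := ((hasDerivAt_id' t).fun_mul (Real.hasDerivAt_cosh t)).fun_sub
      (Real.hasDerivAt_sinh t)
    rw [hd.deriv, one_mul, add_sub_cancel_left]
    exact mul_nonneg ht.le (Real.sinh_nonneg_iff.2 ht.le)
  simpa using hmono Set.self_mem_Ici hx hx

lemma Real.isBigO_cosh_sub_one : (fun r => Real.cosh r - 1) =O[𝓝 0] (fun r : ℝ => r ^ 2) := by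
  have hsinh : Real.sinh =O[𝓝 0] (fun r : ℝ => r) := Real.isEquivalent_sinh.isBigO
  refine IsBigO.trans (IsBigO.of_bound 1 (Eventually.of_forall fun r => ?_)) (hsinh.pow 2)
  have h1 := Real.one_le_cosh r
  have h2 := Real.cosh_sq r
  rw [Real.norm_of_nonneg (by linarith), Real.norm_of_nonneg (by positivity)]
  nlinarith

lemma Real.isBigO_sinh_div_self_sub_one :
    (fun r => Real.sinh r / r - 1) =O[𝓝[>] 0] (fun r : ℝ => r ^ 2) := by
  refine IsBigO.trans (IsBigO.of_bound 1 ?_) (Real.isBigO_cosh_sub_one.mono nhdsWithin_le_nhds)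
  filter_upwards [self_mem_nhdsWithin] with r (hr : 0 < r)
  have hlow : 1 ≤ Real.sinh r / r := (one_le_div hr).2 (Real.self_le_sinh_iff.2 hr.le)
  have hup : Real.sinh r / r ≤ Real.cosh r := (div_le_iff₀' hr).2 (Real.sinh_le_mul_cosh hr.le)
  rw [one_mul, Real.norm_of_nonneg (by linarith), Real.norm_of_nonneg (by linarith)]
  linarith

lemma DifferentiableAt.isBigO_comp_sub {𝕜 E F G ι : Type*} [NontriviallyNormedField 𝕜]
    [NormedAddCommGroup E] [NormedSpace 𝕜 E] [NormedAddCommGroup F] [NormedSpace 𝕜 F]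
    [NormedAddCommGroup G] {l : Filter ι} {f : E → F} {a : E} (hf : DifferentiableAt 𝕜 f a)
    {g : ι → E} {h : ι → G} (hg : (fun i => g i - a) =O[l] h) (hh : Tendsto h l (𝓝 0)) :
    (fun i => f (g i) - f a) =O[l] h :=
  (hf.isBigO_sub.comp_tendsto (tendsto_sub_nhds_zero_iff.1 (hg.trans_tendsto hh))).trans hg

lemma Asymptotics.IsBigO.exists_pos_bound_nhdsGT {E : Type*} [NormedAddCommGroup E]
    {f : ℝ → E} {g : ℝ → ℝ} {a : ℝ} (h : f =O[𝓝[>] a] g) :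
    ∃ C δ : ℝ, 0 < C ∧ 0 < δ ∧ ∀ r, a < r → r < a + δ → ‖f r‖ ≤ C * ‖g r‖ := by
  obtain ⟨C, hC, hCg⟩ := h.exists_pos
  obtain ⟨u, hu, hsub⟩ := mem_nhdsGT_iff_exists_Ioo_subset.1 hCg.bound
  exact ⟨C, u - a, hC, sub_pos.2 hu, fun r h1 h2 => hsub ⟨h1, by linarith⟩⟩

lemma im_sq_ne_zero {α : ℂ} (hα : 0 < α.re) (hb : α.im ≠ 0) : (α ^ 2).im ≠ 0 := by
  simp only [sq, mul_im]
  have := mul_ne_zero hα.ne' hb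
  contrapose! this
  linarith

lemma sq_sub_one_mem_slitPlane {α : ℂ} (hα : 0 < α.re) (hcut : ¬ (α.im = 0 ∧ α.re ≤ 1)) :
    α ^ 2 - 1 ∈ slitPlane := by
  rw [mem_slitPlane_iff]
  rcases eq_or_ne α.im 0 with hb | hb
  · have ha1 : 1 < α.re := lt_of_not_ge fun h => hcut ⟨hb, h⟩
    left
    simp only [sq, sub_re, mul_re, hb, one_re]
    nlinarith
  · right
    simpa using im_sq_ne_zero hα hb

lemma re_add_one_div_pos {α Q : ℂ} (hα : 0 < α.re) (hQ : 0 < Q.re) (hQsq : Q ^ 2 = α ^ 2 - 1) :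
    0 < ((α + 1) / Q).re := by
  have him : Q.re * Q.im = α.re * α.im := by
    have h := congrArg im hQsq
    simp only [sq, mul_im, sub_im, one_im, sub_zero] at h
    linarith
  have hsign : 0 ≤ α.im * Q.im := by
    have : Q.re * (α.im * Q.im) = α.re * α.im ^ 2 := by linear_combination α.im * him
    nlinarith [mul_nonneg hα.le (sq_nonneg α.im)]
  rw [div_re, ← add_div]
  refine div_pos ?_ (normSq_pos.2 (ne_zero_of_re_pos hQ))
  simp only [add_re, one_re, add_im, one_im, add_zero]
  nlinarith

lemma one_sub_sq_mem_slitPlane {α : ℂ} (hα : 0 < α.re) (hb : α.im ≠ 0) :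
    1 - α ^ 2 ∈ slitPlane :=
  mem_slitPlane_iff.2 (Or.inr (by simpa using im_sq_ne_zero hα hb))

lemma log_div_csqrt_sq_sub_one {α z : ℂ} (hα : 0 < α.re) (hcut : ¬ (α.im = 0 ∧ α.re ≤ 1))
    (hz : 0 < (z / (α + 1)).re) :
    log (z / csqrt (α ^ 2 - 1))
      = log (z / (α + 1)) + 1 / 2 * log ((α + 1) / (α - 1)) := by
  set Q := csqrt (α ^ 2 - 1)
  have hQ : 0 < Q.re := re_csqrt_pos (sq_sub_one_mem_slitPlane hα hcut)
  have hQsq : Q ^ 2 = α ^ 2 - 1 := csqrt_sq _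
  have hv := re_add_one_div_pos hα hQ hQsq
  have hα1 : α + 1 ≠ 0 := ne_zero_of_re_pos (by rw [add_re, one_re]; linarith)
  have hαm1 : α - 1 ≠ 0 := by
    rintro h
    exact hcut ⟨by simpa using congrArg im h, by simpa using (congrArg re h).le⟩
  have hQ0 : Q ≠ 0 := ne_zero_of_re_pos hQ
  have hsplit : z / Q = z / (α + 1) * ((α + 1) / Q) := by field_simp
  have hsq : (α + 1) / (α - 1) = (α + 1) / Q * ((α + 1) / Q) := by
    field_simp
    linear_combination hQsq
  rw [hsplit, hsq, log_mul_of_re_pos hz hv, log_mul_of_re_pos hv hv]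
  ring

noncomputable section

variable (α : ℂ)

def phaseRadical (r : ℝ) : ℂ := csqrt (1 + α ^ 2 * (Real.sinh r : ℂ) ^ 2)

def phaseMean (r : ℝ) : ℂ := ((Real.cosh r : ℂ) + phaseRadical α r) / 2

def phaseRatio (r : ℝ) : ℂ := (α * (Real.cosh r : ℂ) + phaseRadical α r) / (α + 1)

def phaseRemainder (r : ℝ) : ℂ :=
  α * log (phaseRatio α r) + (Real.log (Real.sinh r / r) : ℂ)
    + 1 / 2 * log ((phaseMean α r)⁻¹ ^ 2)

lemma isBigO_phaseRadical_sub_one :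
    (fun r => phaseRadical α r - 1) =O[𝓝 0] (fun r : ℝ => r ^ 2) := by
  have hsinh : (fun r => α ^ 2 * (Real.sinh r : ℂ) ^ 2) =O[𝓝 0] (fun r : ℝ => r ^ 2) := by
    have := (isBigO_ofReal_left.2 Real.isEquivalent_sinh.isBigO).pow 2
    simpa using this.const_mul_left (α ^ 2)
  have hr2 : Tendsto (fun r : ℝ => r ^ 2) (𝓝 0) (𝓝 0) :=
    (continuous_pow 2).tendsto' 0 0 (zero_pow two_ne_zero)
  have := (differentiableAt_csqrt one_mem_slitPlane).isBigO_comp_sub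
    (g := fun r => 1 + α ^ 2 * (Real.sinh r : ℂ) ^ 2)
    (by simpa only [add_sub_cancel_left] using hsinh) hr2
  rw [csqrt_one] at this
  exact this

lemma isBigO_phaseMean_sub_one :
    (fun r => phaseMean α r - 1) =O[𝓝 0] (fun r : ℝ => r ^ 2) := by
  have hcosh := isBigO_ofReal_left.2 Real.isBigO_cosh_sub_one
  refine ((hcosh.add (isBigO_phaseRadical_sub_one α)).const_mul_left (1 / 2)).congr_left fun r => ?_
  simp only [phaseMean]
  push_cast
  ring

lemma isBigO_phaseRatio_sub_one (hα : α + 1 ≠ 0) :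
    (fun r => phaseRatio α r - 1) =O[𝓝 0] (fun r : ℝ => r ^ 2) := by
  have hcosh := isBigO_ofReal_left.2 Real.isBigO_cosh_sub_one
  refine (((hcosh.const_mul_left α).add (isBigO_phaseRadical_sub_one α)).const_mul_left
    (α + 1)⁻¹).congr_left fun r => ?_
  simp only [phaseRatio]
  field_simp
  push_cast
  ring

lemma phaseRadical_eq_ofReal (hα : α.im = 0) (r : ℝ) :
    phaseRadical α r = (√(1 + α.re ^ 2 * Real.sinh r ^ 2) : ℝ) := by
  have hα' : α = (α.re : ℂ) := Complex.ext rfl (by simp [hα])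
  rw [← csqrt_ofReal (by positivity), phaseRadical]
  conv_lhs => rw [hα']
  push_cast
  rfl

lemma im_phaseMean_inv_sq_eq_zero (hα : α.im = 0) (r : ℝ) :
    ((phaseMean α r)⁻¹ ^ 2).im = 0 := by
  rw [phaseMean, phaseRadical_eq_ofReal α hα]
  norm_cast

lemma log_cosh_sub_div_cosh_add {r : ℝ} (hr : 0 < r) (hα : α ^ 2 ≠ 1) (hm : phaseMean α r ≠ 0) :
    log (((Real.cosh r : ℂ) - phaseRadical α r) / ((Real.cosh r : ℂ) + phaseRadical α r))
      = ((2 * Real.log (Real.sinh r / 2) : ℝ) : ℂ)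
        + log ((1 - α ^ 2) * (phaseMean α r)⁻¹ ^ 2) := by
  have hS : phaseRadical α r ^ 2 = 1 + α ^ 2 * (Real.sinh r : ℂ) ^ 2 := csqrt_sq _
  have hcs : (Real.cosh r : ℂ) ^ 2 = 1 + (Real.sinh r : ℂ) ^ 2 := by
    exact_mod_cast (Real.cosh_sq r).trans (add_comm _ _)
  have hsum : (Real.cosh r : ℂ) + phaseRadical α r = 2 * phaseMean α r := by
    simp only [phaseMean]; ring
  have hfactor : ((Real.cosh r : ℂ) - phaseRadical α r) / ((Real.cosh r : ℂ) + phaseRadical α r)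
      = (((Real.sinh r / 2) ^ 2 : ℝ) : ℂ) * ((1 - α ^ 2) * (phaseMean α r)⁻¹ ^ 2) := by
    rw [hsum]
    simp only [ofReal_pow, ofReal_div, ofReal_ofNat]
    field_simp
    linear_combination hcs - hS - ((Real.cosh r : ℂ) - phaseRadical α r) * hsum
  have hs : 0 < Real.sinh r / 2 := by positivity
  rw [hfactor, log_ofReal_mul (pow_pos hs 2)
    (mul_ne_zero (sub_ne_zero.2 (Ne.symm hα)) (by simpa using hm)), Real.log_pow]
  push_cast
  ring

lemma phiL_sub_eq_phaseRemainder (hα : 0 < α.re) (hcut : ¬ (α.im = 0 ∧ α.re ≤ 1)) {r : ℝ}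
    (hr : 0 < r) (hu : 0 < (phaseRatio α r).re) (hm : phaseMean α r ≠ 0)
    (hbranch : log ((1 - α ^ 2) * (phaseMean α r)⁻¹ ^ 2)
      = log (1 - α ^ 2) + log ((phaseMean α r)⁻¹ ^ 2)) :
    phiL α r - (log ((r : ℂ) / 2) + pfun α) = phaseRemainder α r := by
  have hα2 : α ^ 2 ≠ 1 :=
    sub_ne_zero.1 (slitPlane_ne_zero (sq_sub_one_mem_slitPlane hα hcut))
  have hphi : phiL α r
      = α * log ((α * (Real.cosh r : ℂ) + phaseRadical α r) / csqrt (α ^ 2 - 1))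
        + 1 / 2 * log (((Real.cosh r : ℂ) - phaseRadical α r)
          / ((Real.cosh r : ℂ) + phaseRadical α r)) := rfl
  have hlogr : log ((r : ℂ) / 2) = (Real.log (r / 2) : ℂ) := by
    rw [ofReal_log (by positivity)]
    push_cast
    rfl
  have hs : Real.sinh r ≠ 0 := (Real.sinh_pos_iff.2 hr).ne'
  have hlogs : Real.log (Real.sinh r / r) = Real.log (Real.sinh r / 2) - Real.log (r / 2) := by
    rw [Real.log_div hs hr.ne', Real.log_div hs two_ne_zero, Real.log_div hr.ne' two_ne_zero]
    ring
  rw [hphi, log_div_csqrt_sq_sub_one hα hcut hu, log_cosh_sub_div_cosh_add α hr hα2 hm, hbranch,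
    hlogr, phaseRemainder, hlogs, pfun, phaseRatio]
  push_cast
  ring

lemma isBigO_phaseRemainder (hα : α + 1 ≠ 0) :
    phaseRemainder α =O[𝓝[>] 0] (fun r : ℝ => r ^ 2) := by
  have hr2 : Tendsto (fun r : ℝ => r ^ 2) (𝓝[>] 0) (𝓝 0) :=
    ((continuous_pow 2).tendsto' 0 0 (zero_pow two_ne_zero)).mono_left nhdsWithin_le_nhds
  have hlog := differentiableAt_log one_mem_slitPlane
  have hu := hlog.isBigO_comp_sub ((isBigO_phaseRatio_sub_one α hα).mono nhdsWithin_le_nhds) hr2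
  have hinv : DifferentiableAt ℂ (fun z : ℂ => z⁻¹ ^ 2) 1 :=
    (differentiableAt_inv one_ne_zero).pow 2
  have hy := hinv.isBigO_comp_sub ((isBigO_phaseMean_sub_one α).mono nhdsWithin_le_nhds) hr2
  simp only [inv_one, one_pow] at hy
  have hm := hlog.isBigO_comp_sub hy hr2
  have hs := (Real.differentiableAt_log one_ne_zero).isBigO_comp_sub
    Real.isBigO_sinh_div_self_sub_one hr2
  simp only [log_one, Real.log_one, sub_zero] at hu hm hs
  exact ((hu.const_mul_left α).add (isBigO_ofReal_left.2 hs)).add (hm.const_mul_left _)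

lemma eventually_phiL_sub_eq (hα : 0 < α.re) (hcut : ¬ (α.im = 0 ∧ α.re ≤ 1)) :
    (fun r => phiL α r - (log ((r : ℂ) / 2) + pfun α)) =ᶠ[𝓝[>] 0] phaseRemainder α := by
  have hK : 1 - α ^ 2 ≠ 0 := fun h =>
    slitPlane_ne_zero (sq_sub_one_mem_slitPlane hα hcut) (by linear_combination -h)
  have hα1 : α + 1 ≠ 0 := ne_zero_of_re_pos (by rw [add_re, one_re]; linarith)
  have hr2 : Tendsto (fun r : ℝ => r ^ 2) (𝓝 0) (𝓝 0) :=
    (continuous_pow 2).tendsto' 0 0 (zero_pow two_ne_zero)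
  have hu := tendsto_sub_nhds_zero_iff.1 ((isBigO_phaseRatio_sub_one α hα1).trans_tendsto hr2)
  have hm := tendsto_sub_nhds_zero_iff.1 ((isBigO_phaseMean_sub_one α).trans_tendsto hr2)
  have hy : Tendsto (fun r => (phaseMean α r)⁻¹ ^ 2) (𝓝 0) (𝓝 1) := by
    simpa using (hm.inv₀ one_ne_zero).pow 2
  -- For real `α > 1` the constant `1 - α²` lies on the branch cut, but then `m` is real.
  have hbranch := eventually_log_mul_eq_add_log hK hy <| by
    rcases eq_or_ne α.im 0 with hb | hb
    · exact Or.inr (.of_forall (im_phaseMean_inv_sq_eq_zero α hb))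
    · exact Or.inl (one_sub_sq_mem_slitPlane hα hb)
  filter_upwards [self_mem_nhdsWithin, nhdsWithin_le_nhds hu.eventually_re_pos,
    nhdsWithin_le_nhds (hm.eventually_ne one_ne_zero), nhdsWithin_le_nhds hbranch]
    with r hr hur hm0 hbr
  exact phiL_sub_eq_phaseRemainder α hα hcut hr hur hm0 hbr

end

/-- As `r → 0⁺`, with `α` fixed, `Re α > 0`, `α ∉ [0,1]`,
`φ(α,r) = log(r/2) + p(α) + O(r²)`. -/
theorem liouville_phase_asymptotics_at_zero (α : ℂ) (hα : 0 < α.re)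
    (hcut : ¬ (α.im = 0 ∧ α.re ≤ 1)) :
    ∃ C δ : ℝ, 0 < C ∧ 0 < δ ∧ ∀ r : ℝ, 0 < r → r < δ →
      ‖phiL α r - (Complex.log ((r : ℂ) / 2) + pfun α)‖ ≤ C * r ^ 2 := by
  have hα1 : α + 1 ≠ 0 := ne_zero_of_re_pos (by rw [add_re, one_re]; linarith)
  obtain ⟨C, δ, hC, hδ, hbound⟩ := ((isBigO_phaseRemainder α hα1).congr'
    (eventually_phiL_sub_eq α hα hcut).symm EventuallyEq.rfl).exists_pos_bound_nhdsGT
  refine ⟨C, δ, hC, hδ, fun r hr hrδ => ?_⟩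
  simpa using hbound r hr (by simpa using hrδ)
end

section
/- For all z ∈ ℂ, |tan(πz)| ≤ 1 + dist(z, ℤ + 1/2)^{-1}, where dist(z, ℤ + 1/2) is the distance from z to the set of half-integers {k + 1/2 : k ∈ ℤ}. -/
/-! The identity `sin² = 1 - cos²` gives `‖sin ζ‖ ≤ 1 + ‖cos ζ‖`, hence
`‖tan ζ‖ ≤ 1 + ‖cos ζ‖⁻¹`. It remains to bound `‖cos (π z)‖` below by the distance from `z`
to `ℤ + 1/2`. Writing `z = k + 1/2 + w` with `k = ⌊Re z⌋`, so that `|Re w| ≤ 1/2`, we have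
`‖cos (π z)‖ = ‖sin (π w)‖`, and `‖sin (π w)‖² = sin² (π Re w) + sinh² (π Im w) ≥ ‖w‖²` by
Jordan's inequality `|sin (π u)| ≥ 2 |u|` for `|u| ≤ 1/2` and `|sinh t| ≥ |t|`. -/

open Complex Metric
open scoped Real

namespace Complex

lemma sq_norm_sin (w : ℂ) : ‖sin w‖ ^ 2 = Real.sin w.re ^ 2 + Real.sinh w.im ^ 2 := by
  have hre : (sin w).re = Real.sin w.re * Real.cosh w.im := by
    rw [sin_eq]; simp [sin_ofReal_re, cosh_ofReal_re]
  have him : (sin w).im = Real.cos w.re * Real.sinh w.im := by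
    rw [sin_eq]; simp [cos_ofReal_re, sinh_ofReal_re]
  rw [Complex.sq_norm, normSq_apply, hre, him]
  nlinarith [Real.cosh_sq w.im, Real.sin_sq_add_cos_sq w.re]

lemma norm_le_norm_sin_pi_mul {w : ℂ} (hw : |w.re| ≤ 1 / 2) : ‖w‖ ≤ ‖sin (π * w)‖ := by
  have hre : |w.re| ≤ |Real.sin (π * w.re)| := by
    have h := Real.mul_abs_le_abs_sin (x := π * w.re) (by
      rw [abs_mul, abs_of_pos Real.pi_pos]; nlinarith [Real.pi_pos])
    rw [abs_mul, abs_of_pos Real.pi_pos] at h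
    field_simp at h
    linarith [abs_nonneg w.re]
  have him : |w.im| ≤ |Real.sinh (π * w.im)| := by
    rw [Real.abs_sinh, abs_mul, abs_of_pos Real.pi_pos]
    calc |w.im| ≤ π * |w.im| :=
          le_mul_of_one_le_left (abs_nonneg _) (by linarith [Real.pi_gt_three])
      _ ≤ Real.sinh (π * |w.im|) := Real.self_le_sinh_iff.2 (by positivity)
  refine (pow_le_pow_iff_left₀ (norm_nonneg _) (norm_nonneg _) two_ne_zero).1 ?_
  rw [sq_norm_sin, re_ofReal_mul, im_ofReal_mul, Complex.sq_norm, normSq_apply, ← sq, ← sq]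
  exact add_le_add (sq_le_sq.2 hre) (sq_le_sq.2 him)

lemma norm_sin_le_one_add_norm_cos (w : ℂ) : ‖sin w‖ ≤ 1 + ‖cos w‖ := by
  refine le_of_sq_le_sq ?_ (by positivity)
  calc ‖sin w‖ ^ 2 = ‖1 - cos w ^ 2‖ := by rw [← norm_pow, ← sin_sq]
    _ ≤ 1 + ‖cos w‖ ^ 2 := (norm_sub_le _ _).trans_eq (by rw [norm_one, norm_pow])
    _ ≤ (1 + ‖cos w‖) ^ 2 := by nlinarith [norm_nonneg (cos w)]

lemma norm_tan_le_one_add_inv_norm_cos (w : ℂ) : ‖tan w‖ ≤ 1 + ‖cos w‖⁻¹ := by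
  rcases eq_or_ne (cos w) 0 with h | h
  · simp [tan_eq_sin_div_cos, h]
  · rw [tan_eq_sin_div_cos, norm_div, div_le_iff₀ (norm_pos_iff.2 h), add_mul,
      inv_mul_cancel₀ (norm_ne_zero_iff.2 h), one_mul, add_comm]
    exact norm_sin_le_one_add_norm_cos w

end Complex

def halfIntegers : Set ℂ := {w : ℂ | ∃ k : ℤ, w = (k : ℂ) + 1 / 2}

lemma halfIntegers_eq_setOf_cos_pi_mul_eq_zero : halfIntegers = {w | cos (π * w) = 0} := by
  ext w
  simp only [halfIntegers, Set.mem_ofPred_eq, cos_eq_zero_iff]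
  refine exists_congr fun k => ?_
  constructor
  · rintro rfl; ring
  · intro h
    apply mul_left_cancel₀ (ofReal_ne_zero.2 Real.pi_ne_zero)
    rw [h]; ring

lemma isClosed_halfIntegers : IsClosed halfIntegers := by
  rw [halfIntegers_eq_setOf_cos_pi_mul_eq_zero]
  exact isClosed_eq (by fun_prop) continuous_const

lemma infDist_halfIntegers_le_norm_cos_pi_mul (z : ℂ) : infDist z halfIntegers ≤ ‖cos (π * z)‖ := by
  set k : ℤ := ⌊z.re⌋
  set w : ℂ := z - (k + 1 / 2)
  have hw : |w.re| ≤ 1 / 2 := by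
    have hre : w.re = z.re - k - 1 / 2 := by simp [w]; ring
    have hk := Int.floor_le z.re
    have hk' := Int.lt_floor_add_one z.re
    exact abs_le.2 ⟨by linarith, by linarith⟩
  have hcos : ‖cos (π * z)‖ = ‖sin (π * w)‖ := by
    have : π * z = π * w + π / 2 + k * π := by simp only [w]; ring
    rw [this, cos_antiperiodic.add_int_mul_eq, cos_add_pi_div_two]
    simp
  calc infDist z halfIntegers ≤ dist z (k + 1 / 2) := infDist_le_dist_of_mem ⟨k, rfl⟩
    _ = ‖w‖ := dist_eq_norm _ _
    _ ≤ ‖cos (π * z)‖ := hcos ▸ norm_le_norm_sin_pi_mul hw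

/-- For all `z ∈ ℂ`, `|tan(πz)| ≤ 1 + dist(z, ℤ + 1/2)⁻¹`, where the distance is to the
set of half-integers `{k + 1/2 : k ∈ ℤ}`. -/
theorem tan_bound_dist_half_integers (z : ℂ) :
    ‖Complex.tan (Real.pi * z)‖
      ≤ 1 + (Metric.infDist z {w : ℂ | ∃ k : ℤ, w = (k : ℂ) + 1 / 2})⁻¹ := by
  change _ ≤ 1 + (infDist z halfIntegers)⁻¹
  rcases eq_or_ne (cos (π * z)) 0 with hcos | hcos
  · rw [tan_eq_sin_div_cos, hcos, div_zero, norm_zero]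
    exact add_nonneg zero_le_one (inv_nonneg.2 infDist_nonneg)
  have hz : z ∉ halfIntegers := by
    rwa [halfIntegers_eq_setOf_cos_pi_mul_eq_zero]
  have hd : 0 < infDist z halfIntegers :=
    (isClosed_halfIntegers.notMem_iff_infDist_pos ⟨1 / 2, 0, by simp⟩).1 hz
  calc ‖tan (π * z)‖ ≤ 1 + ‖cos (π * z)‖⁻¹ := norm_tan_le_one_add_inv_norm_cos _
    _ ≤ 1 + (infDist z halfIntegers)⁻¹ := by
      gcongr
      exact infDist_halfIntegers_le_norm_cos_pi_mul z
end
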